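/- arXiv:2111.09365 — 2 statements merged into one kernel-verified Lean document; each statement's English description precedes it below -/
import Mathlib

section
/- Let m ≥ 1 and L be integers and let γ : ℝ → ℂ∖{0} be a continuous function satisfying γ(t + 1) = γ(t) and γ(t + 1/m) = e^{2πiL/m} γ(t) for all t ∈ ℝ. Then the winding number of γ around the origin (over one period) is congruent to L modulo m. -/
/-!
Comparing the lifts at `t` and `t + 1/m`, the symmetry forces the jump
`θ (t + 1/m) - θ t - 2πL/m` into `2πℤ`; being continuous, it is a constant `2πk`.
Adding up `m` such jumps gives `θ 1 - θ 0 = 2π (L + m k)`.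
-/

open Complex AddSubgroup

lemma sub_mem_zmultiples_two_pi_of_exp_mul_I_eq {x y : ℝ}
    (h : exp (x * I) = exp (y * I)) : x - y ∈ zmultiples (2 * Real.pi) := by
  obtain ⟨n, hn⟩ := (Circle.exp_eq_exp (x := x) (y := y)).1 (Circle.ext h)
  exact mem_zmultiples_iff.2 ⟨n, by rw [zsmul_eq_mul]; linarith⟩

lemma sub_sub_mem_zmultiples_two_pi_of_eq_exp_mul {z w : ℂ} (hw : w ≠ 0) {x y c : ℝ}
    (hz : z = ‖z‖ * exp (x * I)) (hw' : w = ‖w‖ * exp (y * I))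
    (h : z = exp (c * I) * w) : x - y - c ∈ zmultiples (2 * Real.pi) := by
  have hnorm : ‖z‖ = ‖w‖ := by rw [h, norm_mul, norm_exp_ofReal_mul_I, one_mul]
  have hw0 : (‖w‖ : ℂ) ≠ 0 := by exact_mod_cast norm_ne_zero_iff.2 hw
  rw [sub_sub]
  apply sub_mem_zmultiples_two_pi_of_exp_mul_I_eq
  apply mul_left_cancel₀ hw0
  calc (‖w‖ : ℂ) * exp (x * I) = z := by rw [← hnorm, ← hz]
    _ = exp (c * I) * (‖w‖ * exp (y * I)) := by rw [h, ← hw']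
    _ = ‖w‖ * exp ((y + c : ℝ) * I) := by push_cast; rw [add_mul, exp_add]; ring

lemma exists_forall_eq_add_of_sub_mem_zmultiples {θ : ℝ → ℝ} (hθ : Continuous θ) {h c p : ℝ}
    (hjump : ∀ t, θ (t + h) - θ t - c ∈ zmultiples p) :
    ∃ k : ℤ, ∀ t, θ (t + h) = θ t + c + k * p := by
  have hconst (t : ℝ) : θ (t + h) - θ t - c = θ (0 + h) - θ 0 - c :=
    isPreconnected_univ.constant_of_mapsTo
      (isDiscrete_iff_discreteTopology.2 (inferInstanceAs (DiscreteTopology (zmultiples p))))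
      (by fun_prop) (fun t _ ↦ hjump t) (Set.mem_univ t) (Set.mem_univ 0)
  obtain ⟨k, hk⟩ := mem_zmultiples_iff.1 (hjump 0)
  refine ⟨k, fun t ↦ ?_⟩
  rw [zsmul_eq_mul] at hk
  linarith [hconst t]

lemma eq_add_nat_mul_of_forall_eq_add {θ : ℝ → ℝ} {h d : ℝ} (hθ : ∀ t, θ (t + h) = θ t + d)
    (t : ℝ) (n : ℕ) : θ (t + n * h) = θ t + n * d := by
  induction n with
  | zero => simp
  | succ n ih => rw [Nat.cast_succ, add_one_mul, ← add_assoc, hθ, ih, add_one_mul, add_assoc]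

theorem stmt14_general (m : ℕ) (hm : 1 ≤ m) (L : ℤ) (γ : ℝ → ℂ)
    (hγne : ∀ t, γ t ≠ 0)
    (hsym : ∀ t, γ (t + 1 / m) =
      Complex.exp (2 * (Real.pi : ℂ) * Complex.I * (L : ℂ) / (m : ℂ)) * γ t)
    (θ : ℝ → ℝ) (hθcont : Continuous θ)
    (hlift : ∀ t, γ t = (‖γ t‖ : ℂ) * Complex.exp ((θ t : ℂ) * Complex.I)) :
    ∃ w : ℤ, θ 1 - θ 0 = 2 * Real.pi * (w : ℝ) ∧ (m : ℤ) ∣ (w - L) := by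
  have hm0 : (m : ℝ) ≠ 0 := Nat.cast_ne_zero.2 (by omega)
  have hphase : 2 * (Real.pi : ℂ) * I * L / m = (2 * Real.pi * L / m : ℝ) * I := by
    push_cast; ring
  obtain ⟨k, hk⟩ := exists_forall_eq_add_of_sub_mem_zmultiples hθcont fun t ↦
    sub_sub_mem_zmultiples_two_pi_of_eq_exp_mul (hγne t) (hlift _) (hlift t)
      (by rw [hsym, hphase])
  refine ⟨L + m * k, ?_, ⟨k, by ring⟩⟩
  have htelescope := eq_add_nat_mul_of_forall_eq_add (fun t ↦ (hk t).trans (add_assoc _ _ _)) 0 m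
  rw [zero_add, mul_one_div_cancel hm0] at htelescope
  rw [htelescope]
  field_simp
  push_cast
  ring

/-- Let `m ≥ 1`, `L ∈ ℤ`, and `γ : ℝ → ℂ∖{0}` continuous with `γ(t+1) = γ(t)` and
`γ(t+1/m) = e^{2πiL/m} γ(t)`. Then for any continuous lift `θ` of the argument of `γ`
(i.e. `γ(t) = ‖γ(t)‖ e^{iθ(t)}`), the winding number `(θ(1) − θ(0))/2π` is an
integer congruent to `L` modulo `m`. -/
theorem stmt14 (m : ℕ) (hm : 1 ≤ m) (L : ℤ) (γ : ℝ → ℂ)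
    (hγcont : Continuous γ) (hγne : ∀ t, γ t ≠ 0)
    (hper : ∀ t, γ (t + 1) = γ t)
    (hsym : ∀ t, γ (t + 1 / m) =
      Complex.exp (2 * (Real.pi : ℂ) * Complex.I * (L : ℂ) / (m : ℂ)) * γ t)
    (θ : ℝ → ℝ) (hθcont : Continuous θ)
    (hlift : ∀ t, γ t = (‖γ t‖ : ℂ) * Complex.exp ((θ t : ℂ) * Complex.I)) :
    ∃ w : ℤ, θ 1 - θ 0 = 2 * Real.pi * (w : ℝ) ∧ (m : ℤ) ∣ (w - L) :=
  stmt14_general m hm L γ hγne hsym θ hθcont hlift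
end

section
/- Let u : ℝ³ → ℂ² be a smooth map with ‖u(k)‖ = 1 for all k and u(k + 2π e_μ) = u(k) for each standard basis vector e_μ. Define the Berry connection A_μ(k) = i⟨u(k), ∂_μ u(k)⟩ (a real-valued 1-form), the Berry curvature F = ∇ × A, and the Chern–Simons integral χ[u] = −(1/4π²) ∫_{[0,2π]³} F·A d³k. If u′(k) := conj(u(−k)) (componentwise complex conjugation composed with momentum inversion), then A′(k) = A(−k), F′(k) = −F(−k), and consequently χ[u′] = −χ[u]. -/
open MeasureTheory Complex

noncomputable section

/-- Three-dimensional momentum space. -/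
abbrev E3 : Type := EuclideanSpace ℝ (Fin 3)
/-- The two-component intra-cell Hilbert space. -/
abbrev C2 : Type := EuclideanSpace ℂ (Fin 2)

/-- The standard basis vector `e_μ` of momentum space. -/
def bvec (μ : Fin 3) : E3 := EuclideanSpace.single μ (1 : ℝ)

/-- The Berry connection `A_μ(k) = i⟨u(k), ∂_μ u(k)⟩` (real-valued since `‖u‖ ≡ 1`). -/
def berryA (u : E3 → C2) (μ : Fin 3) (k : E3) : ℝ :=
  (Complex.I * (inner ℂ (u k) (fderiv ℝ u k (bvec μ)) : ℂ)).re

/-- Partial derivative `∂_μ f` of a real-valued function on momentum space. -/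
def pd (f : E3 → ℝ) (μ : Fin 3) (k : E3) : ℝ := fderiv ℝ f k (bvec μ)

/-- The Berry curvature `F = ∇ × A`, componentwise `F_μ = ∂_{μ+1}A_{μ+2} − ∂_{μ+2}A_{μ+1}`. -/
def berryF (u : E3 → C2) (μ : Fin 3) (k : E3) : ℝ :=
  pd (berryA u (μ + 1)) (μ + 2) k - pd (berryA u (μ + 2)) (μ + 1) k

/-- The Chern–Simons integral `χ[u] = −(1/4π²)∫_{[0,2π]³} F·A d³k`. -/
def hopfCS (u : E3 → C2) : ℝ :=
  -(1 / (4 * Real.pi ^ 2)) *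
    ∫ k in {k : E3 | ∀ i, k i ∈ Set.Icc (0 : ℝ) (2 * Real.pi)},
      ∑ μ, berryF u μ k * berryA u μ k

/-- Time reversal of the band wave function: `u′(k) = conj(u(−k))`. -/
def timeRev (u : E3 → C2) : E3 → C2 := fun k => WithLp.toLp 2 (fun i => starRingEnd ℂ (u (-k) i) : Fin 2 → ℂ)

/-! Complex conjugation conjugates the inner product, and the chain rule for `k ↦ -k` contributes
a sign; in `A = Re (i⟨u, ∂u⟩)` the two cancel, so `A′(k) = A(-k)`, while the curl picks up the
sign of the reflection. Hence the Chern–Simons density of `u′` is minus the reflected density of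
`u`. The density is `2π`-periodic in each direction, and reflecting the cube `[0, 2π]³` is the
same as translating it by `(2π, 2π, 2π)`, which does not change the integral. -/

open Function

def EuclideanSpace.conjLIE (ι : Type*) [Fintype ι] :
    EuclideanSpace ℂ ι ≃ₗᵢ[ℝ] EuclideanSpace ℂ ι :=
  LinearIsometryEquiv.piLpCongrRight 2 fun _ => Complex.conjLIE

theorem EuclideanSpace.inner_conjLIE_conjLIE {ι : Type*} [Fintype ι]
    (a b : EuclideanSpace ℂ ι) :
    inner ℂ (conjLIE ι a) (conjLIE ι b) = starRingEnd ℂ (inner ℂ a b) := by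
  simp [conjLIE, PiLp.inner_apply, map_sum]

theorem fderiv_comp_neg {𝕜 E F : Type*} [NontriviallyNormedField 𝕜] [NormedAddCommGroup E]
    [NormedSpace 𝕜 E] [NormedAddCommGroup F] [NormedSpace 𝕜 F] (f : E → F) (x : E) :
    fderiv 𝕜 (fun y => f (-y)) x = -fderiv 𝕜 f (-x) := by
  simpa using fderiv_comp_smul (f := f) (x := x) (-1 : 𝕜)

theorem timeRev_eq (u : E3 → C2) : timeRev u = fun k => EuclideanSpace.conjLIE (Fin 2) (u (-k)) :=
  rfl

theorem fderiv_timeRev_apply (u : E3 → C2) (k w : E3) :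
    fderiv ℝ (timeRev u) k w = -EuclideanSpace.conjLIE (Fin 2) (fderiv ℝ u (-k) w) := by
  rw [timeRev_eq, show (fun k => EuclideanSpace.conjLIE (Fin 2) (u (-k))) =
    EuclideanSpace.conjLIE (Fin 2) ∘ fun k => u (-k) from rfl,
    LinearIsometryEquiv.comp_fderiv, fderiv_comp_neg]
  simp

theorem berryA_timeRev (u : E3 → C2) (μ : Fin 3) (k : E3) :
    berryA (timeRev u) μ k = berryA u μ (-k) := by
  rw [berryA, berryA, fderiv_timeRev_apply, timeRev_eq, inner_neg_right,
    EuclideanSpace.inner_conjLIE_conjLIE]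
  generalize inner ℂ (u (-k)) _ = z
  simp [Complex.mul_re]

theorem pd_comp_neg (f : E3 → ℝ) (μ : Fin 3) (k : E3) :
    pd (fun x => f (-x)) μ k = -pd f μ (-k) := by
  simp [pd, fderiv_comp_neg]

theorem berryF_timeRev (u : E3 → C2) (μ : Fin 3) (k : E3) :
    berryF (timeRev u) μ k = -berryF u μ (-k) := by
  have hA : ∀ ν, berryA (timeRev u) ν = fun x => berryA u ν (-x) :=
    fun ν => funext (berryA_timeRev u ν)
  rw [berryF, berryF, hA, hA, pd_comp_neg, pd_comp_neg]
  ring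

theorem periodic_pd {f : E3 → ℝ} {c : E3} (hf : Periodic f c) (μ : Fin 3) :
    Periodic (pd f μ) c := fun k => by
  rw [pd, pd, ← fderiv_comp_add_right, hf.funext]

theorem periodic_berryA {u : E3 → C2} {c : E3} (hu : Periodic u c) (μ : Fin 3) :
    Periodic (berryA u μ) c := fun k => by
  rw [berryA, berryA, ← fderiv_comp_add_right, hu.funext, hu k]

theorem periodic_berryF {u : E3 → C2} {c : E3} (hu : Periodic u c) (μ : Fin 3) :
    Periodic (berryF u μ) c := fun k => by
  rw [berryF, berryF, periodic_pd (periodic_berryA hu _) _ k,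
    periodic_pd (periodic_berryA hu _) _ k]

theorem MeasureTheory.setIntegral_comp_neg_of_periodic {X E : Type*} [MeasurableSpace X]
    [AddGroup X] [MeasurableAdd X] [MeasurableNeg X] {μ : Measure X} [μ.IsAddRightInvariant]
    [μ.IsNegInvariant] [NormedAddCommGroup E] [NormedSpace ℝ E] {f : X → E} {c : X} {S : Set X}
    (hS : -S = (· + c) ⁻¹' S) (hf : Periodic f c) :
    ∫ x in S, f (-x) ∂μ = ∫ x in S, f x ∂μ := by
  calc ∫ x in S, f (-x) ∂μ = ∫ x in -S, f x ∂μ := by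
        simpa using (Measure.measurePreserving_neg μ).setIntegral_preimage_emb
          (MeasurableEquiv.neg X).measurableEmbedding f (-S)
    _ = ∫ x in (· + c) ⁻¹' S, f (x + c) ∂μ := by rw [hS, hf.funext]
    _ = ∫ x in S, f x ∂μ := (measurePreserving_add_right μ c).setIntegral_preimage_emb
          (MeasurableEquiv.addRight c).measurableEmbedding f S

theorem neg_cube_eq_preimage_add {ι : Type*} (L : ℝ) (c : EuclideanSpace ℝ ι)
    (hc : ∀ i, c i = L) :
    -{k : EuclideanSpace ℝ ι | ∀ i, k i ∈ Set.Icc 0 L} =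
      (· + c) ⁻¹' {k : EuclideanSpace ℝ ι | ∀ i, k i ∈ Set.Icc 0 L} := by
  ext k
  simp only [Set.mem_neg, Set.mem_preimage, Set.mem_ofPred_eq, Set.mem_Icc, PiLp.neg_apply,
    PiLp.add_apply, hc]
  refine forall_congr' fun i => ?_
  constructor <;> rintro ⟨h₁, h₂⟩ <;> constructor <;> linarith

theorem stmt16_general (u : E3 → C2)
    (hper : ∀ (k : E3) (μ : Fin 3), u (k + (2 * Real.pi) • bvec μ) = u k) :
    (∀ (μ : Fin 3) (k : E3), berryA (timeRev u) μ k = berryA u μ (-k)) ∧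
    (∀ (μ : Fin 3) (k : E3), berryF (timeRev u) μ k = -berryF u μ (-k)) ∧
    hopfCS (timeRev u) = -hopfCS u := by
  refine ⟨berryA_timeRev u, berryF_timeRev u, ?_⟩
  set c : E3 := (2 * Real.pi) • bvec 0 + (2 * Real.pi) • bvec 1 + (2 * Real.pi) • bvec 2
  have hu : Periodic u c :=
    ((Periodic.add_period (fun k => hper k 0) fun k => hper k 1).add_period fun k => hper k 2)
  have hc : ∀ i, c i = 2 * Real.pi := by
    intro i; fin_cases i <;> simp [c, bvec]
  have hdensity : Periodic (fun k => ∑ μ, berryF u μ k * berryA u μ k) c := fun k => by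
    simp only [periodic_berryF hu _ k, periodic_berryA hu _ k]
  simp only [hopfCS, berryF_timeRev, berryA_timeRev, neg_mul, Finset.sum_neg_distrib,
    integral_neg, setIntegral_comp_neg_of_periodic (neg_cube_eq_preimage_add _ c hc) hdensity]
  ring

/-- Time reversal acts on the Berry connection as `A′(k) = A(−k)`, on the Berry
curvature as `F′(k) = −F(−k)`, and consequently the Hopf (Chern–Simons) invariant
is odd under time reversal: `χ[u′] = −χ[u]`. -/
theorem stmt16 (u : E3 → C2) (hsm : ContDiff ℝ (⊤ : ℕ∞) u) (hnorm : ∀ k, ‖u k‖ = 1)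
    (hper : ∀ (k : E3) (μ : Fin 3), u (k + (2 * Real.pi) • bvec μ) = u k) :
    (∀ (μ : Fin 3) (k : E3), berryA (timeRev u) μ k = berryA u μ (-k)) ∧
    (∀ (μ : Fin 3) (k : E3), berryF (timeRev u) μ k = -berryF u μ (-k)) ∧
    hopfCS (timeRev u) = -hopfCS u :=
  stmt16_general u hper

end
end
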